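/- arXiv:2206.00981 — 4 statements merged into one kernel-verified Lean document; each statement's English description precedes it below -/
import Mathlib

section
/- Let R be a commutative local ring with 2 invertible, let p ≤ n, and let (u₁, …, u_p) be a unimodular sequence of vectors in R^{2n}. Then there exist vectors u₁♯, …, u_p♯ ∈ R^{2n} such that ⟨uᵢ, uⱼ♯⟩ = δ_{ij} for all 1 ≤ i, j ≤ p. Equivalently, the R-linear map T : R^{2n} → R^p, x ↦ (⟨u₁, x⟩, …, ⟨u_p, x⟩) is surjective. -/
/-!
`psi` is the permutation matrix of the involution swapping `2k` and `2k+1`, so `ψ² = 1` and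
`⟨u, ψ w⟩ = u ⬝ᵥ w`. It therefore suffices to solve `uᵢ ⬝ᵥ w = yᵢ`. Unimodularity makes the
`uᵢ` a spanning family of `p` vectors in a free direct summand of rank `p`, hence a basis of it
(Orzech property); composing the coordinates with a projection onto the summand gives a matrix
`A` with `A uᵢ = eᵢ`, and `w = Aᵀ y` solves the system.
-/

open Matrix Function

def psi (n : ℕ) (R : Type*) [CommRing R] : Matrix (Fin (2*n)) (Fin (2*n)) R :=
  Matrix.of fun i j => if i.val / 2 = j.val / 2 ∧ i.val ≠ j.val then 1 else 0

def form (n : ℕ) {R : Type*} [CommRing R] (u v : Fin (2*n) → R) : R :=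
  u ⬝ᵥ (psi n R) *ᵥ v

def Onn (n : ℕ) (R : Type*) [CommRing R] : Subgroup (GL (Fin (2*n)) R) where
  carrier := {A | (↑A : Matrix (Fin (2*n)) (Fin (2*n)) R)ᵀ * psi n R * ↑A = psi n R}
  one_mem' := by simp
  mul_mem' := by
    intro a b ha hb
    simp only [Set.mem_setOf_eq, Units.val_mul, Matrix.transpose_mul] at *
    calc (↑b : Matrix _ _ R)ᵀ * (↑a : Matrix _ _ R)ᵀ * psi n R * (↑a * ↑b)
        = (↑b : Matrix _ _ R)ᵀ * (((↑a : Matrix _ _ R)ᵀ * psi n R * ↑a) * ↑b) := by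
          simp only [Matrix.mul_assoc]
      _ = psi n R := by rw [ha, ← Matrix.mul_assoc, hb]
  inv_mem' := by
    intro a ha
    simp only [Set.mem_setOf_eq] at *
    set A : Matrix (Fin (2*n)) (Fin (2*n)) R := ↑a with hA
    set B : Matrix (Fin (2*n)) (Fin (2*n)) R := ↑(a⁻¹) with hB
    have hAB : A * B = 1 := by rw [hA, hB]; exact a.mul_inv
    have key : Bᵀ * (Aᵀ * psi n R * A) * B
        = (A * B)ᵀ * psi n R * (A * B) := by
      rw [Matrix.transpose_mul]
      simp only [Matrix.mul_assoc]
    conv_lhs => rw [← ha]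
    rw [key, hAB]
    simp

def eVec (n : ℕ) (R : Type*) [CommRing R] (i : Fin n) : Fin (2*n) → R :=
  Pi.single ⟨2*i.val, by have := i.isLt; omega⟩ 1

def fVec (n : ℕ) (R : Type*) [CommRing R] (i : Fin n) : Fin (2*n) → R :=
  Pi.single ⟨2*i.val+1, by have := i.isLt; omega⟩ 1

def IsUnimodular (R : Type*) [CommRing R] {M : Type*} [AddCommGroup M] [Module R M]
    (m : ℕ) {q : ℕ} (v : Fin q → M) : Prop :=
  ∀ s : Finset (Fin q), s.card ≤ min m q →
    ∃ N : Submodule R M, IsCompl (Submodule.span R (v '' ↑s)) N ∧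
      Module.Free R (Submodule.span R (v '' ↑s)) ∧
      Module.finrank R (Submodule.span R (v '' ↑s)) = s.card

def IsTotallyIsotropic (n : ℕ) {R : Type*} [CommRing R] {q : ℕ}
    (v : Fin q → (Fin (2*n) → R)) : Prop :=
  ∀ i j, form n (v i) (v j) = 0

def IU (n : ℕ) (R : Type*) [CommRing R] (k : ℕ) :=
  {v : Fin k → Fin (2*n) → R // IsTotallyIsotropic n v ∧ IsUnimodular R (2*n) v}

def stabOf (n : ℕ) (R : Type*) [CommRing R] (S : Set (Fin (2*n) → R)) :
    Subgroup (GL (Fin (2*n)) R) where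
  carrier := {A | ∀ v ∈ S, (↑A : Matrix (Fin (2*n)) (Fin (2*n)) R) *ᵥ v = v}
  one_mem' := by intro v hv; simp
  mul_mem' := by
    intro a b ha hb v hv
    show (↑(a*b) : Matrix (Fin (2*n)) (Fin (2*n)) R) *ᵥ v = v
    rw [Units.val_mul, ← Matrix.mulVec_mulVec, hb v hv, ha v hv]
  inv_mem' := by
    intro a ha v hv
    show (↑(a⁻¹) : Matrix (Fin (2*n)) (Fin (2*n)) R) *ᵥ v = v
    conv_lhs => rw [← ha v hv]
    rw [Matrix.mulVec_mulVec]
    have : (↑(a⁻¹) : Matrix (Fin (2*n)) (Fin (2*n)) R) * (↑a : Matrix (Fin (2*n)) (Fin (2*n)) R) = 1 := a.inv_mul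
    rw [this, Matrix.one_mulVec]

def Dmat (n k : ℕ) {R : Type*} [CommRing R] (a : Rˣ) :
    Matrix (Fin (2*n)) (Fin (2*n)) R :=
  Matrix.diagonal (fun i =>
    if i.val < 2*k then (if i.val % 2 = 0 then (a : R) else ((a⁻¹ : Rˣ) : R)) else 1)

def Bmat (n : ℕ) {R : Type*} [CommRing R] (c : R) :
    Matrix (Fin (2*n)) (Fin (2*n)) R :=
  Matrix.diagonal (fun i => if i.val % 2 = 0 then 1 else c)

def pairSwap (n : ℕ) (i : Fin (2*n)) : Fin (2*n) :=
  ⟨2 * (i.val / 2) + (1 - i.val % 2), by omega⟩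

lemma pairSwap_involutive (n : ℕ) : Involutive (pairSwap n) := fun i => by
  ext; simp only [pairSwap]; omega

lemma psi_eq_permMatrix (n : ℕ) (R : Type*) [CommRing R] :
    psi n R = (pairSwap_involutive n).toPerm.permMatrix R := by
  ext i j
  have hij : (i.val / 2 = j.val / 2 ∧ i.val ≠ j.val) ↔ pairSwap n i = j := by
    simp only [Fin.ext_iff, pairSwap]; omega
  simp [psi, PEquiv.toMatrix_apply, hij]

lemma psi_mul_psi (n : ℕ) (R : Type*) [CommRing R] : psi n R * psi n R = 1 := by
  have hsq : (pairSwap_involutive n).toPerm * (pairSwap_involutive n).toPerm = 1 :=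
    Equiv.ext (pairSwap_involutive n)
  rw [psi_eq_permMatrix, ← permMatrix_mul, hsq, permMatrix_one]

lemma form_psi_mulVec (n : ℕ) {R : Type*} [CommRing R] (u w : Fin (2*n) → R) :
    form n u (psi n R *ᵥ w) = u ⬝ᵥ w := by
  rw [form, mulVec_mulVec, psi_mul_psi, one_mulVec]

open Module Submodule in
lemma exists_linearMap_apply_eq_single_of_isCompl {R M : Type*} [CommRing R] [AddCommGroup M]
    [Module R M] {q : ℕ} {v : Fin q → M} {N : Submodule R M}
    (hN : IsCompl (span R (Set.range v)) N) (hrank : finrank R (span R (Set.range v)) = q) :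
    ∃ L : M →ₗ[R] Fin q → R, ∀ i, L (v i) = Pi.single i 1 := by
  rcases subsingleton_or_nontrivial R with hR | hR
  · exact ⟨0, fun i => Subsingleton.elim _ _⟩
  have hli : LinearIndependent R v := by
    rw [linearIndependent_iff_card_eq_finrank_span, Set.finrank, hrank, Fintype.card_fin]
  refine ⟨(Basis.span hli).equivFun.toLinearMap ∘ₗ projectionOnto _ N hN, fun i => ?_⟩
  have hproj : projectionOnto _ N hN (v i) = Basis.span hli i := by
    rw [Basis.span_apply]; exact projectionOnto_apply_left hN ⟨v i, subset_span ⟨i, rfl⟩⟩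
  rw [LinearMap.comp_apply, hproj, LinearEquiv.coe_coe, Basis.equivFun_apply, Basis.repr_self,
    Finsupp.single_eq_pi_single]

lemma IsUnimodular.exists_mulVec_eq_single {R ι : Type*} [CommRing R] [Fintype ι]
    [DecidableEq ι] {m q : ℕ} {v : Fin q → ι → R} (hv : IsUnimodular R m v) (hq : q ≤ m) :
    ∃ A : Matrix (Fin q) ι R, ∀ i, A *ᵥ v i = Pi.single i 1 := by
  obtain ⟨N, hN, -, hrank⟩ := hv Finset.univ (by simpa using hq)
  rw [Finset.card_univ, Fintype.card_fin] at hrank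
  rw [Finset.coe_univ, Set.image_univ] at hN hrank
  obtain ⟨L, hL⟩ := exists_linearMap_apply_eq_single_of_isCompl hN hrank
  exact ⟨LinearMap.toMatrix' L, fun i => by rw [LinearMap.toMatrix'_mulVec, hL]⟩

theorem statement_5_general (R : Type*) [CommRing R]
    (n p : ℕ) (hp : p ≤ n) (u : Fin p → Fin (2*n) → R)
    (hu : IsUnimodular R (2*n) u) :
    (∃ us : Fin p → Fin (2*n) → R,
      ∀ i j : Fin p, form n (u i) (us j) = if i = j then 1 else 0) ∧
    Function.Surjective (fun x : Fin (2*n) → R => fun i : Fin p => form n (u i) x) := by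
  obtain ⟨A, hA⟩ := hu.exists_mulVec_eq_single (by omega)
  have hT : ∀ y i, form n (u i) (psi n R *ᵥ (Aᵀ *ᵥ y)) = y i := fun y i => by
    rw [form_psi_mulVec, dotProduct_mulVec, vecMul_transpose, hA i, single_one_dotProduct]
  exact ⟨⟨fun j => psi n R *ᵥ (Aᵀ *ᵥ Pi.single j 1), fun i j => by rw [hT, Pi.single_apply]⟩,
    fun y => ⟨_, funext (hT y)⟩⟩

theorem statement_5 (R : Type*) [CommRing R] [IsLocalRing R] (h2 : IsUnit (2 : R))
    (n p : ℕ) (hp : p ≤ n) (u : Fin p → Fin (2*n) → R)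
    (hu : IsUnimodular R (2*n) u) :
    (∃ us : Fin p → Fin (2*n) → R,
      ∀ i j : Fin p, form n (u i) (us j) = if i = j then 1 else 0) ∧
    Function.Surjective (fun x : Fin (2*n) → R => fun i : Fin p => form n (u i) x) :=
  statement_5_general R n p hp u hu
end

section
/- Let R be a commutative ring and 1 ≤ k ≤ n. The map ρ : T_k → O_{n−k,n−k}(R) sending a matrix A in the stabiliser T_k = St(e₁, …, e_k) ⊆ O_{n,n}(R) to its lower-right 2(n−k)×2(n−k) block is a surjective group homomorphism. Consequently there is a short exact sequence of groups 1 → L_k → T_k → O_{n−k,n−k}(R) → 1 where L_k = ker ρ. -/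
open Matrix Function

/-! An element `A` of `T_k` fixes the standard basis vectors `ε_{2i}` (`i < k`), and since
it preserves the form it also fixes the functionals `⟨ε_{2i}, -⟩ = ε_{2i+1}ᵀ`. So in the block
decomposition `Fin (2n) = Fin (2k) ⊕ Fin (2(n-k))` its lower-left block vanishes on even columns
and its upper-right block vanishes on odd rows. As `ψ` only pairs indices of different parity,
the cross terms in the lower-right blocks of `A * B` and of `Aᵀ * ψ * A` then vanish, so `ρ` is
multiplicative and lands in `O_{n-k,n-k}(R)`. The section `B ↦ diag(1_{2k}, B)` gives
surjectivity. -/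

section Blocks

variable {R : Type*} [CommRing R] {l m : Type*} [Fintype l] [Fintype m]

lemma toBlocks₂₂_mul_of_forall_eq_zero (P : l → Prop) (X Y : Matrix (l ⊕ m) (l ⊕ m) R)
    (hX : ∀ p i, P i → X.toBlocks₂₁ p i = 0) (hY : ∀ i q, ¬P i → Y.toBlocks₁₂ i q = 0) :
    (X * Y).toBlocks₂₂ = X.toBlocks₂₂ * Y.toBlocks₂₂ := by
  ext p q
  have hl : ∑ i, X (.inr p) (.inl i) * Y (.inl i) (.inr q) = 0 :=
    Finset.sum_eq_zero fun i _ => by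
      by_cases hi : P i
      · rw [show X (.inr p) (.inl i) = 0 from hX p i hi, zero_mul]
      · rw [show Y (.inl i) (.inr q) = 0 from hY i q hi, mul_zero]
  simp [toBlocks₂₂, mul_apply, Fintype.sum_sum_type, hl]

lemma toBlocks₂₂_transpose_mul_mul_of_eq (ψ₁ : Matrix l l R) (ψ₂ : Matrix m m R)
    (X : Matrix (l ⊕ m) (l ⊕ m) R) (hX : Xᵀ * fromBlocks ψ₁ 0 0 ψ₂ * X = fromBlocks ψ₁ 0 0 ψ₂)
    (h₁₂ : X.toBlocks₁₂ᵀ * ψ₁ * X.toBlocks₁₂ = 0) :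
    X.toBlocks₂₂ᵀ * ψ₂ * X.toBlocks₂₂ = ψ₂ := by
  have h := congrArg toBlocks₂₂ hX
  rw [← fromBlocks_toBlocks X] at h
  simpa [fromBlocks_transpose, fromBlocks_multiply, h₁₂] using h

lemma vecMul_mul_eq_of_mulVec_eq {ι : Type*} [Fintype ι] {A ψ : Matrix ι ι R}
    (hA : Aᵀ * ψ * A = ψ) {v : ι → R} (hv : A *ᵥ v = v) : (v ᵥ* ψ) ᵥ* A = v ᵥ* ψ := by
  calc (v ᵥ* ψ) ᵥ* A = ((A *ᵥ v) ᵥ* ψ) ᵥ* A := by rw [hv]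
    _ = v ᵥ* (Aᵀ * ψ * A) := by
      rw [← vecMul_transpose, vecMul_vecMul, vecMul_vecMul, Matrix.mul_assoc]
    _ = v ᵥ* ψ := by rw [hA]

end Blocks

section Psi
variable {R : Type*} [CommRing R] {n k : ℕ}

lemma transpose_mul_psi_mul_eq_zero {m : Type*} [Fintype m] (Y : Matrix (Fin (2*k)) m R)
    (hY : ∀ i q, ¬Even i.val → Y i q = 0) : Yᵀ * psi k R * Y = 0 := by
  ext p q
  rw [mul_apply, Matrix.zero_apply]
  refine Finset.sum_eq_zero fun s _ => ?_
  rw [mul_apply, Finset.sum_mul]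
  refine Finset.sum_eq_zero fun r _ => ?_
  simp only [transpose_apply, psi, of_apply]
  split_ifs with h
  · by_cases hr : Even r.val
    · rw [hY s q (by rw [Nat.even_iff] at hr ⊢; omega), mul_zero]
    · rw [hY r p hr, zero_mul, zero_mul]
  · rw [mul_zero, zero_mul]

lemma eVec_vecMul_psi (i : Fin n) : eVec n R i ᵥ* psi n R = fVec n R i := by
  ext j
  rw [eVec, single_one_vecMul, fVec, Pi.single_apply]
  simp only [row, psi, of_apply, Fin.ext_iff]
  split_ifs <;> first | rfl | omega

end Psi

section BlockForm
variable {R : Type*} [CommRing R] {n k : ℕ}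

def blockEquiv (hkn : k ≤ n) : Fin (2*k) ⊕ Fin (2*(n-k)) ≃ Fin (2*n) :=
  finSumFinEquiv.trans (finCongr (by omega))

@[simp] lemma blockEquiv_inl_val (hkn : k ≤ n) (i : Fin (2*k)) :
    (blockEquiv hkn (.inl i)).val = i.val := rfl

@[simp] lemma blockEquiv_inr_val (hkn : k ≤ n) (i : Fin (2*(n-k))) :
    (blockEquiv hkn (.inr i)).val = 2*k + i.val := rfl

variable (R) in
def toBlockForm (hkn : k ≤ n) : Matrix (Fin (2*n)) (Fin (2*n)) R ≃ₐ[R]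
    Matrix (Fin (2*k) ⊕ Fin (2*(n-k))) (Fin (2*k) ⊕ Fin (2*(n-k))) R :=
  reindexAlgEquiv R R (blockEquiv hkn).symm

@[simp] lemma toBlockForm_apply (hkn : k ≤ n) (M : Matrix (Fin (2*n)) (Fin (2*n)) R) (i j) :
    toBlockForm R hkn M i j = M (blockEquiv hkn i) (blockEquiv hkn j) := rfl

lemma toBlockForm_psi (hkn : k ≤ n) :
    toBlockForm R hkn (psi n R) = fromBlocks (psi k R) 0 0 (psi (n-k) R) := by
  ext (i | i) (j | j) <;> simp only [toBlockForm_apply, psi, of_apply, fromBlocks_apply₁₁,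
    fromBlocks_apply₁₂, fromBlocks_apply₂₁, fromBlocks_apply₂₂, Matrix.zero_apply] <;>
    split_ifs <;> simp_all <;> omega

lemma toBlockForm_transpose_mul_psi_mul (hkn : k ≤ n) (M : Matrix (Fin (2*n)) (Fin (2*n)) R) :
    toBlockForm R hkn (Mᵀ * psi n R * M) =
      (toBlockForm R hkn M)ᵀ * fromBlocks (psi k R) 0 0 (psi (n-k) R) * toBlockForm R hkn M := by
  rw [map_mul, map_mul, toBlockForm_psi]
  rfl

end BlockForm

section Stabilizer
variable {R : Type*} [CommRing R] {n k : ℕ}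

variable (R) in
/-- The stabiliser `T_k` of `e₁, …, e_k` in `O_{n,n}(R)`. -/
def stabE (hkn : k ≤ n) : Subgroup (GL (Fin (2*n)) R) :=
  Onn n R ⊓ stabOf n R {w | ∃ i : Fin k, w = eVec n R (Fin.castLE hkn i)}

variable {hkn : k ≤ n} {A : GL (Fin (2*n)) R}

lemma mulVec_eVec_of_mem_stabE (hA : A ∈ stabE R hkn) (i : Fin k) :
    (A : Matrix (Fin (2*n)) (Fin (2*n)) R) *ᵥ eVec n R (Fin.castLE hkn i) =
      eVec n R (Fin.castLE hkn i) :=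
  hA.2 _ ⟨i, rfl⟩

lemma fVec_vecMul_of_mem_stabE (hA : A ∈ stabE R hkn) (i : Fin k) :
    fVec n R (Fin.castLE hkn i) ᵥ* (A : Matrix (Fin (2*n)) (Fin (2*n)) R) =
      fVec n R (Fin.castLE hkn i) := by
  rw [← eVec_vecMul_psi]
  exact vecMul_mul_eq_of_mulVec_eq hA.1 (mulVec_eVec_of_mem_stabE hA i)

lemma toBlocks₂₁_toBlockForm_of_mem_stabE (hA : A ∈ stabE R hkn) (p : Fin (2*(n-k)))
    {i : Fin (2*k)} (hi : Even i.val) : (toBlockForm R hkn A).toBlocks₂₁ p i = 0 := by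
  have hcol := congrFun (mulVec_eVec_of_mem_stabE hA ⟨i / 2, by omega⟩) (blockEquiv hkn (.inr p))
  have hi' : (⟨2 * (i / 2), by omega⟩ : Fin (2*n)) = blockEquiv hkn (.inl i) :=
    Fin.ext (by rw [Nat.even_iff] at hi; simp; omega)
  rw [eVec, mulVec_single_one] at hcol
  simp only [Fin.castLE, hi', col_apply, Pi.single_apply, (blockEquiv hkn).injective.eq_iff,
    reduceCtorEq, if_false] at hcol
  exact hcol

lemma toBlocks₁₂_toBlockForm_of_mem_stabE (hA : A ∈ stabE R hkn) {i : Fin (2*k)}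
    (hi : ¬Even i.val) (q : Fin (2*(n-k))) : (toBlockForm R hkn A).toBlocks₁₂ i q = 0 := by
  have hrow := congrFun (fVec_vecMul_of_mem_stabE hA ⟨i / 2, by omega⟩) (blockEquiv hkn (.inr q))
  have hi' : (⟨2 * (i / 2) + 1, by omega⟩ : Fin (2*n)) = blockEquiv hkn (.inl i) :=
    Fin.ext (by rw [Nat.even_iff] at hi; simp; omega)
  rw [fVec, single_one_vecMul] at hrow
  simp only [Fin.castLE, hi', row_apply, Pi.single_apply, (blockEquiv hkn).injective.eq_iff,
    reduceCtorEq, if_false] at hrow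
  exact hrow

end Stabilizer

section LowerRightBlock
variable {R : Type*} [CommRing R] {n k : ℕ}

variable (R) in
def lowerRightBlock (hkn : k ≤ n) :
    stabE R hkn →* Matrix (Fin (2*(n-k))) (Fin (2*(n-k))) R where
  toFun A := (toBlockForm R hkn (A : GL (Fin (2*n)) R)).toBlocks₂₂
  map_one' := by
    rw [OneMemClass.coe_one, Units.val_one, map_one, ← fromBlocks_one, toBlocks_fromBlocks₂₂]
  map_mul' A B := by
    simp only [Subgroup.coe_mul, Units.val_mul, map_mul]
    exact toBlocks₂₂_mul_of_forall_eq_zero (fun i => Even i.val) _ _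
      (fun p _ hi => toBlocks₂₁_toBlockForm_of_mem_stabE A.2 p hi)
      (fun _ q hi => toBlocks₁₂_toBlockForm_of_mem_stabE B.2 hi q)

lemma lowerRightBlock_mem_Onn {hkn : k ≤ n} (A : stabE R hkn) :
    (lowerRightBlock R hkn A)ᵀ * psi (n-k) R * lowerRightBlock R hkn A = psi (n-k) R := by
  refine toBlocks₂₂_transpose_mul_mul_of_eq (psi k R) _ _ ?_
    (transpose_mul_psi_mul_eq_zero _ fun _ q hi => toBlocks₁₂_toBlockForm_of_mem_stabE A.2 hi q)
  rw [← toBlockForm_transpose_mul_psi_mul, A.2.1, toBlockForm_psi]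

variable (R) in
def lowerRightBlockHom (hkn : k ≤ n) : stabE R hkn →* Onn (n-k) R :=
  (lowerRightBlock R hkn).toHomUnits.codRestrict _ lowerRightBlock_mem_Onn

variable (R) in
def blockDiagHom (hkn : k ≤ n) :
    Matrix (Fin (2*(n-k))) (Fin (2*(n-k))) R →* Matrix (Fin (2*n)) (Fin (2*n)) R where
  toFun B := (toBlockForm R hkn).symm (fromBlocks 1 0 0 B)
  map_one' := by simp [fromBlocks_one]
  map_mul' B C := by simp [← map_mul, fromBlocks_multiply]

lemma toBlockForm_blockDiagHom (hkn : k ≤ n) (B : Matrix (Fin (2*(n-k))) (Fin (2*(n-k))) R) :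
    toBlockForm R hkn (blockDiagHom R hkn B) = fromBlocks 1 0 0 B := by
  simp [blockDiagHom]

lemma blockDiagHom_mem_stabE (hkn : k ≤ n) (B : GL (Fin (2*(n-k))) R) (hB : B ∈ Onn (n-k) R) :
    Units.map (blockDiagHom R hkn) B ∈ stabE R hkn := by
  refine ⟨(toBlockForm R hkn).injective ?_, ?_⟩
  · change toBlockForm R hkn ((blockDiagHom R hkn B)ᵀ * psi n R * blockDiagHom R hkn B) = _
    rw [toBlockForm_transpose_mul_psi_mul, toBlockForm_psi, toBlockForm_blockDiagHom]
    have hB' : (B : Matrix _ _ R)ᵀ * psi (n-k) R * (B : Matrix _ _ R) = psi (n-k) R := hB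
    simp [fromBlocks_transpose, fromBlocks_multiply, hB']
  · rintro _ ⟨i, rfl⟩
    ext p
    obtain ⟨p, rfl⟩ := (blockEquiv hkn).surjective p
    have hi : (⟨2 * i, by omega⟩ : Fin (2*n)) = blockEquiv hkn (.inl ⟨2 * i, by omega⟩) := rfl
    rw [Units.coe_map, eVec]
    simp only [Fin.castLE]
    rw [hi, mulVec_single_one, col_apply, ← toBlockForm_apply hkn (blockDiagHom R hkn B),
      toBlockForm_blockDiagHom]
    rcases p with p | p <;> simp [one_apply, Pi.single_apply, (blockEquiv hkn).injective.eq_iff]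

lemma lowerRightBlockHom_surjective (hkn : k ≤ n) :
    Function.Surjective (lowerRightBlockHom R hkn) := by
  rintro ⟨B, hB⟩
  refine ⟨⟨_, blockDiagHom_mem_stabE hkn B hB⟩, Subtype.ext (Units.ext ?_)⟩
  change (toBlockForm R hkn (blockDiagHom R hkn B)).toBlocks₂₂ = B
  rw [toBlockForm_blockDiagHom, toBlocks_fromBlocks₂₂]

end LowerRightBlock

theorem statement_10 (n k : ℕ) (R : Type*) [CommRing R]
    (hkn : k ≤ n)
    (Tk : Subgroup (GL (Fin (2*n)) R))
    (hTk : Tk = Onn n R ⊓ stabOf n R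
      {w | ∃ i : Fin k, w = eVec n R ⟨i.val, by have := i.isLt; omega⟩}) :
    ∃ ρ : ↥Tk →* ↥(Onn (n-k) R),
      (∀ (A : ↥Tk) (i j : Fin (2*(n-k))),
        ((↑(ρ A) : GL (Fin (2*(n-k))) R) : Matrix (Fin (2*(n-k))) (Fin (2*(n-k))) R) i j =
          ((↑A : GL (Fin (2*n)) R) : Matrix (Fin (2*n)) (Fin (2*n)) R)
            ⟨2*k + i.val, by have := i.isLt; omega⟩
            ⟨2*k + j.val, by have := j.isLt; omega⟩) ∧
      Function.Surjective ρ := by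
  subst hTk
  exact ⟨lowerRightBlockHom R hkn, fun _ _ _ => rfl, lowerRightBlockHom_surjective hkn⟩
end

section
/- Let R be a local ring whose residue field is infinite. Then for every m ≥ 1 there exists an S(m)-sequence in R: units a₁, …, a_m ∈ R^* such that for every non-empty subset I ⊆ {1,…,m}, the partial sum a_I := ∑_{i∈I} aᵢ is a unit in R. -/
open Matrix Function

/-! Over an infinite domain `k` the product of the linear forms `∑ i ∈ I, X i` over all nonempty
`I` is a nonzero polynomial, so it does not vanish at some point `x`; all subset sums of `x` are
then nonzero. Applied to the residue field, any lift of `x` to `R` has unit subset sums. -/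

namespace MvPolynomial

theorem exists_eval_ne_zero {R σ : Type*} [CommRing R] [IsDomain R] [Infinite R]
    {p : MvPolynomial σ R} (hp : p ≠ 0) : ∃ x : σ → R, eval x p ≠ 0 := by
  by_contra! h
  exact hp (funext fun x => by simpa using h x)

theorem sum_X_ne_zero {R σ : Type*} [CommSemiring R] [Nontrivial R] {I : Finset σ}
    (hI : I.Nonempty) : ∑ i ∈ I, (X i : MvPolynomial σ R) ≠ 0 := by
  classical
  obtain ⟨i, hi⟩ := hI
  intro h
  have := congrArg (coeff (Finsupp.single i 1)) h
  simp only [coeff_sum, coeff_X, (Finsupp.single_left_injective one_ne_zero).eq_iff,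
    Finset.sum_ite_eq', if_pos hi, coeff_zero] at this
  exact one_ne_zero this

end MvPolynomial

open MvPolynomial in
theorem exists_forall_sum_ne_zero (k ι : Type*) [CommRing k] [IsDomain k] [Infinite k]
    [Fintype ι] : ∃ x : ι → k, ∀ I : Finset ι, I.Nonempty → ∑ i ∈ I, x i ≠ 0 := by
  classical
  set P : MvPolynomial ι k := ∏ I ∈ Finset.univ.filter Finset.Nonempty, ∑ i ∈ I, X i
  have hP : P ≠ 0 := Finset.prod_ne_zero_iff.mpr fun I hI => sum_X_ne_zero (by simpa using hI)
  obtain ⟨x, hx⟩ := exists_eval_ne_zero hP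
  refine ⟨x, fun I hI => ?_⟩
  simp only [P, map_prod, map_sum, eval_X, Finset.prod_ne_zero_iff] at hx
  exact hx I (by simpa using hI)

theorem IsLocalRing.exists_units_forall_isUnit_sum (R ι : Type*) [CommRing R] [IsLocalRing R]
    [Infinite (IsLocalRing.ResidueField R)] [Fintype ι] :
    ∃ a : ι → Rˣ, ∀ I : Finset ι, I.Nonempty → IsUnit (∑ i ∈ I, (a i : R)) := by
  obtain ⟨x, hx⟩ := exists_forall_sum_ne_zero (ResidueField R) ι
  choose r hr using fun i => residue_surjective (x i)
  have hunit (I : Finset ι) (hI : I.Nonempty) : IsUnit (∑ i ∈ I, r i) := by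
    rw [← residue_ne_zero_iff_isUnit, map_sum]
    simpa only [hr] using hx I hI
  refine ⟨fun i => (hunit {i} (Finset.singleton_nonempty i)).unit, fun I hI => ?_⟩
  simpa only [IsUnit.unit_spec, Finset.sum_singleton] using hunit I hI

theorem statement_16_general (R : Type*) [CommRing R] [IsLocalRing R]
    (hres : Infinite (IsLocalRing.ResidueField R)) (m : ℕ) :
    ∃ a : Fin m → Rˣ,
      ∀ I : Finset (Fin m), I.Nonempty → IsUnit (∑ i ∈ I, (a i : R)) :=
  IsLocalRing.exists_units_forall_isUnit_sum R (Fin m)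

theorem statement_16 (R : Type*) [CommRing R] [IsLocalRing R]
    (hres : Infinite (IsLocalRing.ResidueField R)) (m : ℕ) (hm : 1 ≤ m) :
    ∃ a : Fin m → Rˣ,
      ∀ I : Finset (Fin m), I.Nonempty → IsUnit (∑ i ∈ I, (a i : R)) :=
  statement_16_general R hres m
end

section
/- Let R be a commutative local ring with infinite residue field, let L be a finitely generated free R-module of rank s, and let (v₁ⁱ, …, v_qⁱ), i = 1, …, ℓ, be finitely many unimodular sequences of length q < s in L. Then there exists v ∈ L such that (v, v₁ⁱ, …, v_qⁱ) is a unimodular sequence of length q+1 in L for every i = 1, …, ℓ. -/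
open Matrix Function

/-!
Over a local ring `R` with residue field `k`, a sequence of at most `rank L` vectors is
unimodular exactly when its image in `k ⊗[R] L` is linearly independent: a direct summand that
is free of rank `t` and spanned by `t` vectors has them as a basis, which stays a basis after
base change, while conversely a lift of a basis of `k ⊗[R] L` is a basis of `L` by Nakayama's
lemma. The theorem thus reduces to finding a vector of `k ⊗[R] L` outside finitely many
subspaces of dimension `q < s`, which is possible because a vector space over an infinite field
is not a finite union of proper subspaces.
-/

open IsLocalRing TensorProduct Submodule Module

theorem Module.Basis.sumExtend_apply_inl {K V ι : Type*} [DivisionRing K] [AddCommGroup V]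
    [Module K V] {v : ι → V} (hv : LinearIndependent K v) (i : ι) :
    Basis.sumExtend hv (Sum.inl i) = v i := by
  simp only [Basis.sumExtend, Basis.reindex_apply, Basis.extend_apply_self]
  rfl

theorem linearIndependent_one_tmul_of_isCompl_span {R A L ι : Type*} [CommRing R] [CommRing A]
    [Algebra R A] [AddCommGroup L] [Module R L] [Fintype ι] {w : ι → L} {N : Submodule R L}
    (hN : IsCompl (span R (Set.range w)) N)
    (hrank : finrank R (span R (Set.range w)) = Fintype.card ι) :
    LinearIndependent A (TensorProduct.mk R A L 1 ∘ w) := by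
  set M := span R (Set.range w)
  let w' : ι → M := fun i => ⟨w i, subset_span ⟨i, rfl⟩⟩
  have hspan : ⊤ ≤ span R (Set.range w') := by
    rw [show Set.range w' = ((↑) : M → L) ⁻¹' Set.range w by ext; simp [w', Subtype.ext_iff],
      span_span_coe_preimage]
  let b : Basis ι R M := basisOfTopLeSpanOfCardEqFinrank w' hspan hrank.symm
  have hinj : Function.Injective (M.subtype.baseChange A) := by
    refine Function.LeftInverse.injective (g := (M.projectionOnto N hN).baseChange A) fun x => ?_
    rw [← LinearMap.comp_apply, ← LinearMap.baseChange_comp, projectionOnto_comp_subtype,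
      LinearMap.baseChange_id, LinearMap.id_apply]
  convert (b.baseChange A).linearIndependent.map_injOn _ hinj.injOn using 1
  ext i
  simp [b, w']

theorem IsLocalRing.exists_isCompl_span_of_linearIndependent_one_tmul {R L ι : Type*} [CommRing R]
    [IsLocalRing R] [AddCommGroup L] [Module R L] [Module.Finite R L] [Module.Flat R L]
    {w : ι → L}
    (hw : LinearIndependent (ResidueField R) (TensorProduct.mk R (ResidueField R) L 1 ∘ w)) :
    ∃ N : Submodule R L, IsCompl (span R (Set.range w)) N := by
  let B := Basis.sumExtend hw
  have hsurj := TensorProduct.mk_surjective R L (ResidueField R) Ideal.Quotient.mk_surjective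
  let g := Sum.elim w fun j => Function.surjInv hsurj (B (Sum.inr j))
  have hg : ∀ p, 1 ⊗ₜ g p = B p := by
    rintro (i | j)
    · exact (Basis.sumExtend_apply_inl hw i).symm
    · exact Function.surjInv_eq hsurj _
  have hgB : TensorProduct.mk R _ L 1 ∘ g = B := funext hg
  have hli : LinearIndependent R g :=
    IsLocalRing.linearIndependent_of_flat g (hgB ▸ B.linearIndependent)
  refine ⟨span R (g '' Set.range Sum.inr), ?_⟩
  have := hli.isCompl_span_image (span_eq_top_of_tmul_eq_basis g B hg)
    Set.isCompl_range_inl_range_inr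
  rwa [← Set.range_comp] at this

theorem isUnimodular_iff_linearIndependent_one_tmul {R L : Type*} [CommRing R] [IsLocalRing R]
    [AddCommGroup L] [Module R L] [Module.Finite R L] [Module.Flat R L] {m q : ℕ}
    (hq : q ≤ m) {v : Fin q → L} :
    IsUnimodular R m v ↔
      LinearIndependent (ResidueField R) (TensorProduct.mk R (ResidueField R) L 1 ∘ v) := by
  constructor
  · intro hv
    obtain ⟨N, hN, -, hrank⟩ := hv Finset.univ (by simp [hq])
    rw [Finset.coe_univ, Set.image_univ] at hN hrank
    exact linearIndependent_one_tmul_of_isCompl_span hN (by rw [hrank, Finset.card_univ])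
  · intro hv S _
    have hvS := hv.comp ((↑) : S → Fin q) Subtype.val_injective
    have hli := IsLocalRing.linearIndependent_of_flat _ hvS
    obtain ⟨N, hN⟩ := exists_isCompl_span_of_linearIndependent_one_tmul hvS
    have hS : v '' S = Set.range fun x : S => v x := by ext; simp
    rw [hS]
    refine ⟨N, hN, .of_basis (Basis.span hli), ?_⟩
    rw [finrank_span_eq_card hli, Fintype.card_coe]

theorem exists_notMem_span_range_of_lt_finrank {K V ι : Type*} [DivisionRing K] [Infinite K]
    [AddCommGroup V] [Module K V] [Finite ι] {q : ℕ} (f : ι → Fin q → V)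
    (hq : q < finrank K V) : ∃ u : V, ∀ i, u ∉ span K (Set.range (f i)) := by
  by_contra! h
  obtain ⟨i, hi⟩ := Subspace.exists_eq_top_of_iUnion_eq_univ (Set.iUnion_eq_univ_iff.mpr h)
  have := finrank_range_le_card (R := K) (f i)
  rw [Set.finrank, hi, finrank_top, Fintype.card_fin] at this
  omega

theorem statement_17 (R : Type*) [CommRing R] [IsLocalRing R]
    (hres : Infinite (IsLocalRing.ResidueField R))
    (L : Type*) [AddCommGroup L] [Module R L] [Module.Free R L] [Module.Finite R L]
    (s : ℕ) (hrank : Module.finrank R L = s)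
    (q l : ℕ) (hq : q < s) (V : Fin l → Fin q → L)
    (hV : ∀ i, IsUnimodular R s (V i)) :
    ∃ v : L, ∀ i, IsUnimodular R s (Fin.cons v (V i)) := by
  simp_rw [isUnimodular_iff_linearIndependent_one_tmul hq.le] at hV
  simp_rw [isUnimodular_iff_linearIndependent_one_tmul (Nat.succ_le_of_lt hq)]
  have hdim : q < finrank (ResidueField R) (ResidueField R ⊗[R] L) := by
    rwa [finrank_baseChange, hrank]
  obtain ⟨u, hu⟩ := exists_notMem_span_range_of_lt_finrank
    (fun i => TensorProduct.mk R (ResidueField R) L 1 ∘ V i) hdim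
  obtain ⟨v, rfl⟩ := TensorProduct.mk_surjective R L _ Ideal.Quotient.mk_surjective u
  exact ⟨v, fun i => by rw [Fin.comp_cons, linearIndependent_finCons]; exact ⟨hV i, hu i⟩⟩
end
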